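/- Let a_0, a_1, a_2, ... be i.i.d. complex random variables with ℙ(a_0 = 0) = 0 and |a_0| not almost surely constant. Suppose the distribution of |a_0| is absolutely continuous with respect to Lebesgue measure on [0,∞) with density g, and that g is continuous at 0 with g(0) > 0. Then for every integer n ≥ 1, the largest root modulus x_n^(n) of P_n(z) = ∑_{k=0}^n a_k z^k satisfies 𝔼[x_n^(n)] = ∞. -/

import Mathlib

/-!
By Vieta, `a_{n-1} = -a_n · (z_1 + ⋯ + z_n)`, so `‖a_{n-1}‖ ≤ n ‖a_n‖ x_n^(n)` and
`x_n^(n) ≥ (‖a_{n-1}‖ / n) · ‖a_n‖⁻¹`. The two factors are independent, the first has positive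
mean, and `𝔼[‖a_n‖⁻¹] = 𝔼[‖a_0‖⁻¹] = ∞` because `ℙ(‖a_0‖ ≤ t) ≈ g(0) t` near `0`, so that the
layer-cake integral `∫ ℙ(‖a_0‖ ≤ 1/s) ds` diverges like `∫ ds / s`.
-/

open MeasureTheory ProbabilityTheory Polynomial Filter

/-- The random Kac polynomial `P_n(z) = ∑_{k=0}^n a_k z^k`. -/
noncomputable def kacPoly {Ω : Type*} (a : ℕ → Ω → ℂ) (n : ℕ) (ω : Ω) : Polynomial ℂ :=
  ∑ k ∈ Finset.range (n + 1), Polynomial.C (a k ω) * Polynomial.X ^ k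

/-- The smallest modulus of a root of a complex polynomial. -/
noncomputable def minRootMod (p : Polynomial ℂ) : ℝ :=
  sInf ((fun z : ℂ => ‖z‖) '' {z : ℂ | z ∈ p.roots})

/-- The largest modulus of a root of a complex polynomial. -/
noncomputable def maxRootMod (p : Polynomial ℂ) : ℝ :=
  sSup ((fun z : ℂ => ‖z‖) '' {z : ℂ | z ∈ p.roots})

open Set Topology
open scoped ENNReal

theorem norm_le_maxRootMod {p : ℂ[X]} {z : ℂ} (hz : z ∈ p.roots) : ‖z‖ ≤ maxRootMod p :=
  le_csSup (p.roots.finite_toSet.image _).bddAbove ⟨z, hz, rfl⟩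

-- Vieta: `p.nextCoeff = -p.leadingCoeff * (sum of the roots)`.
theorem norm_nextCoeff_le_maxRootMod (p : ℂ[X]) :
    ‖p.nextCoeff‖ ≤ p.natDegree * ‖p.leadingCoeff‖ * maxRootMod p := by
  have hsplit := IsAlgClosed.splits p
  have hsum : ‖p.roots.sum‖ ≤ p.natDegree * maxRootMod p := by
    calc ‖p.roots.sum‖ ≤ (p.roots.map (‖·‖ : ℂ → ℝ)).sum := norm_multiset_sum_le _
      _ ≤ (p.roots.map (‖·‖ : ℂ → ℝ)).card • maxRootMod p :=
        Multiset.sum_le_card_nsmul _ _ fun _ hx => by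
          obtain ⟨z, hz, rfl⟩ := Multiset.mem_map.mp hx
          exact norm_le_maxRootMod hz
      _ = p.natDegree * maxRootMod p := by
        rw [Multiset.card_map, splits_iff_card_roots.mp hsplit, nsmul_eq_mul]
  rw [hsplit.nextCoeff_eq_neg_sum_roots_mul_leadingCoeff, norm_mul, norm_neg]
  calc ‖p.leadingCoeff‖ * ‖p.roots.sum‖ ≤ ‖p.leadingCoeff‖ * (p.natDegree * maxRootMod p) := by
        gcongr
    _ = p.natDegree * ‖p.leadingCoeff‖ * maxRootMod p := by ring

section kacPoly

variable {Ω : Type*} (a : ℕ → Ω → ℂ) (n : ℕ) (ω : Ω)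

theorem kacPoly_coeff {j : ℕ} (hj : j ≤ n) : (kacPoly a n ω).coeff j = a j ω := by
  simp only [kacPoly, finsetSum_coeff, coeff_C_mul_X_pow]
  rw [Finset.sum_ite_eq, if_pos (Finset.mem_range_succ_iff.mpr hj)]

variable {a n ω}

theorem kacPoly_natDegree (h : a n ω ≠ 0) : (kacPoly a n ω).natDegree = n := by
  refine le_antisymm (natDegree_sum_le_of_forall_le _ _ fun k hk => ?_) ?_
  · exact (natDegree_C_mul_X_pow_le _ _).trans (Finset.mem_range_succ_iff.mp hk)
  · exact le_natDegree_of_ne_zero (by rwa [kacPoly_coeff a n ω le_rfl])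

theorem norm_coeff_div_le_maxRootMod_kacPoly (hn : 1 ≤ n) (h : a n ω ≠ 0) :
    ‖a (n - 1) ω‖ / n * ‖a n ω‖⁻¹ ≤ maxRootMod (kacPoly a n ω) := by
  have hbound := norm_nextCoeff_le_maxRootMod (kacPoly a n ω)
  rw [nextCoeff_of_natDegree_pos (by rw [kacPoly_natDegree h]; omega), leadingCoeff,
    kacPoly_natDegree h, kacPoly_coeff a n ω le_rfl, kacPoly_coeff a n ω (Nat.sub_le n 1)] at hbound
  rw [div_mul_eq_mul_div, div_le_iff₀ (by positivity), mul_inv_le_iff₀ (norm_pos_iff.mpr h)]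
  linarith

end kacPoly

theorem lintegral_Ioi_ofReal_inv_eq_top {a : ℝ} (ha : 0 ≤ a) :
    ∫⁻ s in Ioi a, ENNReal.ofReal s⁻¹ = ∞ := by
  by_contra h
  refine not_integrableOn_Ioi_inv ((lintegral_ofReal_ne_top_iff_integrable
    measurable_inv.aestronglyMeasurable ?_).mp h)
  filter_upwards [ae_restrict_mem measurableSet_Ioi] with s hs
  exact inv_nonneg.mpr (ha.trans hs.le)

theorem eventually_mul_le_intervalIntegral {g : ℝ → ℝ} (hgmeas : Measurable g)
    (hgcont : ContinuousAt g 0) {c : ℝ} (hc : c < g 0) :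
    ∀ᶠ t in 𝓝[>] 0, c * t ≤ ∫ s in (0 : ℝ)..t, g s := by
  obtain ⟨U, hU, hgU⟩ : IntegrableAtFilter g (𝓝 0) volume :=
    Filter.Tendsto.integrableAtFilter hgmeas.stronglyMeasurable.stronglyMeasurableAtFilter
      (volume.finiteAt_nhds 0) hgcont
  obtain ⟨ε, hε, hεU⟩ := Metric.mem_nhds_iff.mp (inter_mem hU (hgcont.eventually (lt_mem_nhds hc)))
  filter_upwards [Ioo_mem_nhdsGT hε] with t ht
  have hsub : Icc 0 t ⊆ Metric.ball 0 ε := fun s hs => by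
    rw [Metric.mem_ball, Real.dist_eq, sub_zero, abs_of_nonneg hs.1]
    exact hs.2.trans_lt ht.2
  calc c * t = ∫ _ in (0 : ℝ)..t, c := by simp [mul_comm]
    _ ≤ ∫ s in (0 : ℝ)..t, g s :=
      intervalIntegral.integral_mono_on ht.1.le intervalIntegrable_const
        ((intervalIntegrable_iff_integrableOn_Icc_of_le ht.1.le).mpr
          (hgU.mono_set ((hsub.trans hεU).trans inter_subset_left)))
        fun s hs => ((hsub.trans hεU) hs).2.le

section Moments

variable {Ω : Type*} [MeasurableSpace Ω] {μ : Measure Ω}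

-- Layer cake: `∫ 1/X ≥ ∫_{s > R} μ(X ≤ 1/s) ds ≥ ∫_{s > R} c/s ds = ∞`.
theorem lintegral_inv_eq_top_of_linear_lower_bound {X : Ω → ℝ} (hX : AEMeasurable X μ)
    (hpos : ∀ᵐ ω ∂μ, 0 < X ω) {c : ℝ} (hc : 0 < c)
    (hlow : ∀ᶠ t in 𝓝[>] 0, ENNReal.ofReal (c * t) ≤ μ {ω | X ω ≤ t}) :
    ∫⁻ ω, (ENNReal.ofReal (X ω))⁻¹ ∂μ = ∞ := by
  obtain ⟨R, hR⟩ := eventually_atTop.mp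
    ((tendsto_inv_atTop_nhdsGT_zero.eventually hlow).and (eventually_gt_atTop 0))
  have htail : ∀ s ∈ Ioi (max R 0),
      ENNReal.ofReal c * ENNReal.ofReal s⁻¹ ≤ μ {ω | s ≤ (X ω)⁻¹} := by
    intro s hs
    obtain ⟨hlow_s, hs0⟩ := hR s (le_max_left R 0 |>.trans hs.le)
    rw [← ENNReal.ofReal_mul hc.le]
    refine hlow_s.trans (measure_mono_ae ?_)
    filter_upwards [hpos] with ω hω hle
    exact (le_inv_comm₀ hω hs0).mp hle
  refine eq_top_iff.mpr ?_
  calc ∞ = ENNReal.ofReal c * ∫⁻ s in Ioi (max R 0), ENNReal.ofReal s⁻¹ := by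
        rw [lintegral_Ioi_ofReal_inv_eq_top (le_max_right R 0), ENNReal.mul_top]
        exact ENNReal.ofReal_pos.mpr hc |>.ne'
    _ ≤ ∫⁻ s in Ioi (max R 0), μ {ω | s ≤ (X ω)⁻¹} := by
        rw [← lintegral_const_mul _ measurable_inv.ennreal_ofReal]
        exact setLIntegral_mono' measurableSet_Ioi htail
    _ ≤ ∫⁻ s in Ioi 0, μ {ω | s ≤ (X ω)⁻¹} :=
        lintegral_mono_set (Ioi_subset_Ioi (le_max_right R 0))
    _ = ∫⁻ ω, ENNReal.ofReal (X ω)⁻¹ ∂μ :=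
        (lintegral_eq_lintegral_meas_le μ (hpos.mono fun ω hω => inv_nonneg.mpr hω.le) hX.inv).symm
    _ ≤ ∫⁻ ω, (ENNReal.ofReal (X ω))⁻¹ ∂μ :=
        lintegral_mono_ae (hpos.mono fun ω hω => (ENNReal.ofReal_inv_of_pos hω).le)

theorem lintegral_inv_eq_top_of_density {X : Ω → ℝ} (hX : AEMeasurable X μ)
    (hpos : ∀ᵐ ω ∂μ, 0 < X ω) {g : ℝ → ℝ} (hgmeas : Measurable g)
    (hdens : ∀ t : ℝ, 0 ≤ t → (μ {ω | X ω ≤ t}).toReal = ∫ s in (0 : ℝ)..t, g s)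
    (hgcont : ContinuousAt g 0) (hgpos : 0 < g 0) :
    ∫⁻ ω, (ENNReal.ofReal (X ω))⁻¹ ∂μ = ∞ := by
  refine lintegral_inv_eq_top_of_linear_lower_bound hX hpos (half_pos hgpos) ?_
  filter_upwards [eventually_mul_le_intervalIntegral hgmeas hgcont (half_lt_self hgpos),
    self_mem_nhdsWithin] with t ht ht0
  exact ENNReal.ofReal_le_of_le_toReal (ht.trans (hdens t (le_of_lt ht0)).ge)

theorem lintegral_eq_top_of_indepFun_mul_le {f g h : Ω → ℝ≥0∞} (hf : Measurable f)
    (hg : Measurable g) (hfg : IndepFun f g μ) (hf0 : ∫⁻ ω, f ω ∂μ ≠ 0)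
    (hgtop : ∫⁻ ω, g ω ∂μ = ∞) (hle : ∀ᵐ ω ∂μ, f ω * g ω ≤ h ω) :
    ∫⁻ ω, h ω ∂μ = ∞ :=
  eq_top_iff.mpr <| calc
    ∞ = (∫⁻ ω, f ω ∂μ) * ∫⁻ ω, g ω ∂μ := by rw [hgtop, ENNReal.mul_top hf0]
    _ = ∫⁻ ω, f ω * g ω ∂μ := (lintegral_mul_eq_lintegral_mul_lintegral_of_indepFun hf hg hfg).symm
    _ ≤ ∫⁻ ω, h ω ∂μ := lintegral_mono_ae hle

end Moments

theorem maxRootMod_infinite_mean_of_density_pos_at_zero_general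
    {Ω : Type*} [MeasurableSpace Ω] (μ : Measure Ω) [IsProbabilityMeasure μ]
    (a : ℕ → Ω → ℂ) (hmeas : ∀ k, Measurable (a k))
    (hindep : iIndepFun a μ)
    (hid : ∀ k, IdentDistrib (a k) (a 0) μ μ)
    (h0 : μ {ω | a 0 ω = 0} = 0)
    (g : ℝ → ℝ) (hgmeas : Measurable g)
    (hdens : ∀ t : ℝ, 0 ≤ t →
      (μ {ω | ‖a 0 ω‖ ≤ t}).toReal = ∫ s in (0 : ℝ)..t, g s)
    (hgcont : ContinuousAt g 0) (hgpos : 0 < g 0) :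
    ∀ n : ℕ, 1 ≤ n →
      ∫⁻ ω, ENNReal.ofReal (maxRootMod (kacPoly a n ω)) ∂μ = ⊤ := by
  intro n hn
  have hne : ∀ k, ∀ᵐ ω ∂μ, a k ω ≠ 0 := fun k => by
    rw [ae_iff]
    simp only [ne_eq, not_not]
    exact ((hid k).measure_mem_eq (measurableSet_singleton 0)).trans h0
  have hnorm : ∀ k, Measurable fun ω => ‖a k ω‖ := fun k => (hmeas k).norm
  refine lintegral_eq_top_of_indepFun_mul_le (f := fun ω => ENNReal.ofReal (‖a (n - 1) ω‖ / n))
    (g := fun ω => (ENNReal.ofReal ‖a n ω‖)⁻¹) ((hnorm _).div_const _).ennreal_ofReal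
    (hnorm n).ennreal_ofReal.inv ?_ ?_ ?_ ?_
  · exact (hindep.indepFun (by omega : n - 1 ≠ n)).comp
      (measurable_norm.div_const _).ennreal_ofReal measurable_norm.ennreal_ofReal.inv
  · rw [Ne, lintegral_eq_zero_iff ((hnorm _).div_const _).ennreal_ofReal]
    intro hzero
    obtain ⟨ω, hω0, hω⟩ := (hzero.and (hne (n - 1))).exists
    have hpos : 0 < ‖a (n - 1) ω‖ / n := div_pos (norm_pos_iff.mpr hω) (by exact_mod_cast hn)
    exact (ENNReal.ofReal_pos.mpr hpos).ne' hω0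
  · refine ((hid n).comp measurable_norm.ennreal_ofReal.inv).lintegral_eq.trans ?_
    exact lintegral_inv_eq_top_of_density (hnorm 0).aemeasurable
      ((hne 0).mono fun ω => norm_pos_iff.mpr) hgmeas hdens hgcont hgpos
  · filter_upwards [hne n] with ω hω
    rw [← ENNReal.ofReal_inv_of_pos (norm_pos_iff.mpr hω), ← ENNReal.ofReal_mul (by positivity)]
    exact ENNReal.ofReal_le_ofReal (norm_coeff_div_le_maxRootMod_kacPoly hn hω)

/-- For i.i.d. complex coefficients with `ℙ(a₀ = 0) = 0`, `|a₀|` not a.s.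
constant, and `|a₀|` having a density `g` on `[0,∞)` (`ℙ(|a₀| ≤ t) = ∫₀ᵗ g`) which is
continuous at `0` with `g 0 > 0`, the largest root modulus of `P_n` has infinite mean for
every `n ≥ 1`. -/
theorem maxRootMod_infinite_mean_of_density_pos_at_zero
    {Ω : Type*} [MeasurableSpace Ω] (μ : Measure Ω) [IsProbabilityMeasure μ]
    (a : ℕ → Ω → ℂ) (hmeas : ∀ k, Measurable (a k))
    (hindep : iIndepFun a μ)
    (hid : ∀ k, IdentDistrib (a k) (a 0) μ μ)
    (hnc : ¬ ∃ c : ℝ, 0 ≤ c ∧ μ {ω | ‖a 0 ω‖ = c} = 1)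
    (h0 : μ {ω | a 0 ω = 0} = 0)
    (g : ℝ → ℝ) (hgmeas : Measurable g) (hgnonneg : ∀ t, 0 ≤ g t)
    (hdens : ∀ t : ℝ, 0 ≤ t →
      (μ {ω | ‖a 0 ω‖ ≤ t}).toReal = ∫ s in (0 : ℝ)..t, g s)
    (hgcont : ContinuousAt g 0) (hgpos : 0 < g 0) :
    ∀ n : ℕ, 1 ≤ n →
      ∫⁻ ω, ENNReal.ofReal (maxRootMod (kacPoly a n ω)) ∂μ = ⊤ :=
  maxRootMod_infinite_mean_of_density_pos_at_zero_general μ a hmeas hindep hid h0 g hgmeas hdens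
    hgcont hgpos
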